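/- Let n ≥ 1 and 0 ≤ p ≤ n be integers, and let d, ξ : {1,…,n} → ℝ. Write a² = ∑_i ξ_i², T = ∑_i d_i ξ_i², and D = ∑_i d_i. Then ∑_{|I|=p} (∑_i sgn_I(i) ξ_i²)(∑_j sgn_I(j) d_j) = (C(n,p) − 4C(n−2,p−1))·a²·D + 4C(n−2,p−1)·T. -/

import Mathlib

/-- Binomial coefficient with the convention `C a b = 0` if `b < 0` or `b > a`. -/
def C (a b : ℤ) : ℤ := if 0 ≤ b ∧ b ≤ a then (a.toNat.choose b.toNat : ℤ) else 0

/-- `sgn_I(j) = 1` if `j ∈ I` and `-1` otherwise. -/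
def sgn {n : ℕ} (I : Finset (Fin n)) (j : Fin n) : ℝ := if j ∈ I then 1 else -1

/-!
Expanding the product, the left-hand side is `∑ i j, ξ_i² d_j G_ij` with the Gram entries
`G_ij = ∑_{|I|=p} sgn_I(i) sgn_I(j)`. On the diagonal `G_ii = C(n,p)`. Off the diagonal
`sgn_I(i) sgn_I(j) = -1` exactly when `I` separates `i` and `j`, and `C(n-2,p-1)` of the
`p`-subsets contain `i` but not `j`, so `G_ij = C(n,p) - 4 C(n-2,p-1)`.
-/

open Finset

lemma C_natCast (a b : ℕ) : C a b = a.choose b := by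
  unfold C
  split_ifs with h
  · simp
  · rw [Nat.choose_eq_zero_of_lt (by omega), Nat.cast_zero]

lemma card_filter_powersetCard_mem_and_notMem {α : Type*} [DecidableEq α] {t : Finset α}
    {a b : α} (ha : a ∈ t) (hb : b ∈ t) (hab : a ≠ b) (p : ℕ) :
    (#{I ∈ t.powersetCard p | a ∈ I ∧ b ∉ I} : ℤ) = C ((#t : ℤ) - 2) ((p : ℤ) - 1) := by
  cases p with
  | zero => simp [C]
  | succ k =>
    have hfilter : {I ∈ t.powersetCard (k + 1) | a ∈ I ∧ b ∉ I} =
        {I ∈ (t.erase b).powersetCard (k + 1) | {a} ⊆ I} := by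
      ext I
      simp only [mem_filter, mem_powersetCard, subset_erase, singleton_subset_iff]
      tauto
    have htwo : 2 ≤ #t := by
      simpa [card_pair hab] using card_le_card (insert_subset ha (singleton_subset_iff.2 hb))
    rw [hfilter, card_filter_powersetCard_subset _ _ _
      (singleton_subset_iff.2 (mem_erase.2 ⟨hab, ha⟩)) (by simp), card_erase_of_mem hb,
      card_singleton, show ((#t : ℤ) - 2) = ((#t - 1 - 1 : ℕ) : ℤ) by omega,
      show ((k + 1 : ℕ) : ℤ) - 1 = ((k + 1 - 1 : ℕ) : ℤ) by omega, C_natCast]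

lemma sgn_mul_sgn {n : ℕ} (I : Finset (Fin n)) (i j : Fin n) :
    sgn I i * sgn I j =
      1 - 2 * ((if i ∈ I ∧ j ∉ I then 1 else 0) + (if j ∈ I ∧ i ∉ I then 1 else 0)) := by
  unfold sgn
  split_ifs <;> simp_all <;> norm_num

lemma sum_sgn_mul_sgn (n p : ℕ) (i j : Fin n) :
    ∑ I ∈ powersetCard p (univ : Finset (Fin n)), sgn I i * sgn I j =
      ((C n p : ℝ) - 4 * (C ((n : ℤ) - 2) ((p : ℤ) - 1) : ℝ)) +
        if i = j then 4 * (C ((n : ℤ) - 2) ((p : ℤ) - 1) : ℝ) else 0 := by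
  simp_rw [sgn_mul_sgn]
  rw [sum_sub_distrib, ← mul_sum, sum_add_distrib, sum_boole, sum_boole, sum_const,
    card_powersetCard, card_univ, Fintype.card_fin, C_natCast]
  split_ifs with hij
  · subst hij
    simp
  · have hcount {a b : Fin n} (hab : a ≠ b) :
        (#{I ∈ powersetCard p univ | a ∈ I ∧ b ∉ I} : ℝ) =
          (C ((n : ℤ) - 2) ((p : ℤ) - 1) : ℝ) := by
      have := card_filter_powersetCard_mem_and_notMem (mem_univ a) (mem_univ b) hab p
      rw [card_univ, Fintype.card_fin] at this
      exact_mod_cast this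
    rw [hcount hij, hcount (Ne.symm hij)]
    push_cast
    ring

lemma sum_mul_sum_of_sum_mul_eq {ι κ R : Type*} [Fintype κ] [DecidableEq κ] [CommRing R]
    (S : Finset ι) (s : ι → κ → R) (A B : R)
    (hs : ∀ i j, ∑ I ∈ S, s I i * s I j = A + if i = j then B else 0) (x y : κ → R) :
    ∑ I ∈ S, (∑ i, s I i * x i) * (∑ j, s I j * y j) =
      A * (∑ i, x i) * (∑ j, y j) + B * ∑ i, x i * y i := by
  calc ∑ I ∈ S, (∑ i, s I i * x i) * (∑ j, s I j * y j)
      = ∑ i, ∑ j, x i * y j * ∑ I ∈ S, s I i * s I j := by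
        simp_rw [sum_mul_sum, mul_sum]
        rw [sum_comm]
        refine sum_congr rfl fun i _ => ?_
        rw [sum_comm]
        exact sum_congr rfl fun j _ => sum_congr rfl fun I _ => by ring
    _ = ∑ i, ∑ j, (A * (x i * y j) + if i = j then B * (x i * y j) else 0) := by
        simp_rw [hs]
        exact sum_congr rfl fun i _ => sum_congr rfl fun j _ => by split_ifs <;> ring
    _ = A * (∑ i, x i) * (∑ j, y j) + B * ∑ i, x i * y i := by
        simp only [sum_add_distrib, sum_ite_eq, mem_univ, if_true, ← mul_sum, ← sum_mul]
        ring

theorem stmt14_general (n p : ℕ) (d ξ : Fin n → ℝ) :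
    ∑ I ∈ Finset.powersetCard p (Finset.univ : Finset (Fin n)),
        (∑ i, sgn I i * ξ i ^ 2) * (∑ j, sgn I j * d j) =
      ((C (n : ℤ) (p : ℤ) : ℝ) - 4 * (C ((n : ℤ) - 2) ((p : ℤ) - 1) : ℝ)) *
          (∑ i, ξ i ^ 2) * (∑ i, d i) +
        4 * (C ((n : ℤ) - 2) ((p : ℤ) - 1) : ℝ) * (∑ i, d i * ξ i ^ 2) := by
  rw [sum_mul_sum_of_sum_mul_eq _ _ _ _ (sum_sgn_mul_sgn n p)]
  simp only [mul_comm (d _)]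

theorem stmt14 (n p : ℕ) (hn : 1 ≤ n) (hp : p ≤ n) (d ξ : Fin n → ℝ) :
    ∑ I ∈ Finset.powersetCard p (Finset.univ : Finset (Fin n)),
        (∑ i, sgn I i * ξ i ^ 2) * (∑ j, sgn I j * d j) =
      ((C (n : ℤ) (p : ℤ) : ℝ) - 4 * (C ((n : ℤ) - 2) ((p : ℤ) - 1) : ℝ)) *
          (∑ i, ξ i ^ 2) * (∑ i, d i) +
        4 * (C ((n : ℤ) - 2) ((p : ℤ) - 1) : ℝ) * (∑ i, d i * ξ i ^ 2) :=
  stmt14_general n p d ξ
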